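/- The set H := {(u, q, s) ∈ ℝ³ : s ≥ 0 and u ∈ H_{s,b}(q)} is closed in ℝ³ for every fixed b ∈ (0,∞). In particular, if uₙ → u, qₙ → q, sₙ → s with sₙ ≥ 0 and uₙ ∈ H_{sₙ,b}(qₙ), then u ∈ H_{s,b}(q). -/

import Mathlib

open Filter Topology

/-- The "L⁰ norm" of a real number: 0 if `u = 0`, else 1. -/
noncomputable def nrm0 (u : ℝ) : ℝ := if u = 0 then 0 else 1

/-- `H_{s,b}(q)`: the set of global minimizers of `v ↦ -q·v + v²/2 + s·|v|₀`
over `{v : |v| ≤ b}`. -/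
def Hsb (s b q : ℝ) : Set ℝ :=
  {u | |u| ≤ b ∧ ∀ v : ℝ, |v| ≤ b →
        -q * u + u ^ 2 / 2 + s * nrm0 u ≤ -q * v + v ^ 2 / 2 + s * nrm0 v}

/-- Although `nrm0` jumps at `0`, for `s ≥ 0` the condition splits into conditions that are
closed in `(u, q, s)`; this is why the graph of `H_{s,b}` is closed. -/
lemma add_mul_nrm0_le_iff {a c s u : ℝ} (hs : 0 ≤ s) :
    a + s * nrm0 u ≤ c ↔ a ≤ c ∧ (u = 0 ∨ a + s ≤ c) := by
  by_cases hu : u = 0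
  · simp [nrm0, hu]
  · simp only [nrm0, hu, if_false, mul_one, false_or]
    exact ⟨fun h => ⟨by linarith, h⟩, And.right⟩

lemma isClosed_setOf_nonneg_and_mem_Hsb (b : ℝ) :
    IsClosed {p : ℝ × ℝ × ℝ | 0 ≤ p.2.2 ∧ p.1 ∈ Hsb p.2.2 b p.2.1} := by
  have hset : {p : ℝ × ℝ × ℝ | 0 ≤ p.2.2 ∧ p.1 ∈ Hsb p.2.2 b p.2.1} =
      {p | 0 ≤ p.2.2} ∩ {p | |p.1| ≤ b} ∩ ⋂ v ∈ {v : ℝ | |v| ≤ b},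
        {p | -p.2.1 * p.1 + p.1 ^ 2 / 2 ≤ -p.2.1 * v + v ^ 2 / 2 + p.2.2 * nrm0 v} ∩
        ({p | p.1 = 0} ∪
          {p | -p.2.1 * p.1 + p.1 ^ 2 / 2 + p.2.2 ≤ -p.2.1 * v + v ^ 2 / 2 + p.2.2 * nrm0 v}) := by
    ext ⟨u, q, s⟩
    simp only [Hsb, Set.mem_ofPred_eq, Set.mem_inter_iff, Set.mem_iInter, Set.mem_union]
    constructor
    · rintro ⟨hs, hub, hmin⟩
      exact ⟨⟨hs, hub⟩, fun v hv => (add_mul_nrm0_le_iff hs).1 (hmin v hv)⟩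
    · rintro ⟨⟨hs, hub⟩, hmin⟩
      exact ⟨hs, hub, fun v hv => (add_mul_nrm0_le_iff hs).2 (hmin v hv)⟩
  rw [hset]
  refine ((isClosed_le continuous_const (by fun_prop)).inter
    (isClosed_le (by fun_prop) continuous_const)).inter (isClosed_biInter fun v _ => ?_)
  exact (isClosed_le (by fun_prop) (by fun_prop)).inter
    ((isClosed_eq continuous_fst continuous_const).union (isClosed_le (by fun_prop) (by fun_prop)))

theorem Hsb_graph_closed_in_s (b : ℝ) :
    IsClosed {p : ℝ × ℝ × ℝ | 0 ≤ p.2.2 ∧ p.1 ∈ Hsb p.2.2 b p.2.1} ∧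
    (∀ (un qn sn : ℕ → ℝ) (u q s : ℝ),
      Tendsto un atTop (𝓝 u) → Tendsto qn atTop (𝓝 q) → Tendsto sn atTop (𝓝 s) →
      (∀ n, 0 ≤ sn n) → (∀ n, un n ∈ Hsb (sn n) b (qn n)) →
      u ∈ Hsb s b q) := by
  have hclosed := isClosed_setOf_nonneg_and_mem_Hsb b
  refine ⟨hclosed, fun un qn sn u q s hu hq hs hsn hmem => ?_⟩
  exact (hclosed.mem_of_tendsto (hu.prodMk_nhds (hq.prodMk_nhds hs))
    (Eventually.of_forall fun n => ⟨hsn n, hmem n⟩)).2
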